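/- Let f be Legendre on ℝ^J with Bregman distance D, C ⊆ U = int dom f nonempty compact, x ∈ dom f, and h ∈ ℝ^J. Then the directional derivative of the farthest-distance function F_C at x in direction h equals sup{ f'(x;h) - ⟨h, ∇f(y)⟩ : y ∈ Q_C(x) }, where Q_C(x) = argmax_{c∈C} D(x,c). -/

import Mathlib

open Set Filter Topology Bornology

noncomputable section

/-- Data for a Bregman setup on `ℝ^J`: an extended-real-valued function `f`
together with a choice of gradient map (meaningful on the interior of the domain). -/
structure BregmanSetup (J : ℕ) where
  f : EuclideanSpace ℝ (Fin J) → EReal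
  grad : EuclideanSpace ℝ (Fin J) → EuclideanSpace ℝ (Fin J)

namespace BregmanSetup

open scoped Classical

variable {J : ℕ} (B : BregmanSetup J)

/-- The (essential) domain of `f`. -/
def dom : Set (EuclideanSpace ℝ (Fin J)) := {x | B.f x ≠ ⊤}

/-- `U`, the interior of the domain of `f`. -/
def U : Set (EuclideanSpace ℝ (Fin J)) := interior B.dom

/-- `f` is a convex function of Legendre type: proper, lsc, convex,
essentially smooth (differentiable on `U` with gradient `B.grad`, steep at the
boundary) and essentially strictly convex (strictly convex on `U`). -/
structure IsLegendre : Prop where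
  proper_bot : ∀ x, B.f x ≠ ⊥
  nonempty_int : B.U.Nonempty
  convex_dom : Convex ℝ B.dom
  convexOn : ConvexOn ℝ B.dom (fun x => (B.f x).toReal)
  lsc : LowerSemicontinuous B.f
  smooth : ∀ y ∈ B.U, HasGradientAt (fun x => (B.f x).toReal) (B.grad y) y
  strict : StrictConvexOn ℝ B.U (fun x => (B.f x).toReal)
  steep : ∀ x ∈ frontier B.dom, ∀ s : ℕ → EuclideanSpace ℝ (Fin J),
    (∀ n, s n ∈ B.U) → Tendsto s atTop (nhds x) →
    Tendsto (fun n => ‖B.grad (s n)‖) atTop atTop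

/-- The Bregman distance `D(x,y) = f(x) - f(y) - ⟨∇f(y), x - y⟩` for `y ∈ U`,
and `+∞` otherwise. -/
def D (x y : EuclideanSpace ℝ (Fin J)) : EReal :=
  if y ∈ B.U then B.f x - B.f y - ((inner ℝ (B.grad y) (x - y) : ℝ) : EReal) else ⊤

/-- The right Bregman farthest-distance function of a set `C`. -/
def F (C : Set (EuclideanSpace ℝ (Fin J))) (x : EuclideanSpace ℝ (Fin J)) : EReal :=
  ⨆ c ∈ C, B.D x c

/-- The right Bregman farthest-point map of a set `C` (empty outside `dom f`). -/
def Q (C : Set (EuclideanSpace ℝ (Fin J))) (x : EuclideanSpace ℝ (Fin J)) :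
    Set (EuclideanSpace ℝ (Fin J)) :=
  {c | c ∈ C ∧ x ∈ B.dom ∧ ∀ c' ∈ C, B.D x c' ≤ B.D x c}

end BregmanSetup

/-! For `c ∈ U` the Bregman distance is `D(z, c) = f(z) - T_c(z)`, where `T_c` is the tangent
affine function of `f` at `c`. Hence `F_C = f + g` with `g(z) = max_{c ∈ C} (-T_c(z))`, and
`Q_C(x)` is the set of maximizers defining `g(x)`. Along `x + t h` the functions `-T_c` are affine
in `t` with slope `-⟨h, ∇f(c)⟩`, so Danskin's theorem computes `g'(x; h)` as the largest such slope
over `Q_C(x)`; this needs `∇f` continuous on `U`, which holds for every differentiable convex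
function. Adding `f'(x; h)` in `EReal` gives the formula. -/

open scoped InnerProductSpace

section Gradient

variable {E : Type*} [NormedAddCommGroup E] [InnerProductSpace ℝ E] [CompleteSpace E]
  {s : Set E} {φ : E → ℝ} {g : E → E} {c z v w : E}

theorem ConvexOn.add_inner_gradient_le (hφ : ConvexOn ℝ s φ) (hc : c ∈ s) (hz : z ∈ s)
    (hw : HasGradientAt φ w c) : φ c + ⟪w, z - c⟫_ℝ ≤ φ z := by
  have hline : HasDerivAt (φ ∘ AffineMap.lineMap (k := ℝ) c z) ⟪w, z - c⟫_ℝ 0 := by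
    have hw' : HasFDerivAt φ (InnerProductSpace.toDual ℝ E w)
        (AffineMap.lineMap (k := ℝ) c z 0) := by
      simpa using hw.hasFDerivAt
    simpa using hw'.comp_hasDerivAt (0 : ℝ) AffineMap.hasDerivAt_lineMap
  have := (hφ.comp_affineMap (AffineMap.lineMap (k := ℝ) c z)).le_slope_of_hasDerivAt
    (x := 0) (y := 1) (by simpa) (by simpa) zero_lt_one hline
  simp only [slope, sub_zero, inv_one, Function.comp_apply, AffineMap.lineMap_apply_one,
    AffineMap.lineMap_apply_zero, vsub_eq_sub, smul_eq_mul, one_mul] at this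
  linarith

theorem HasGradientAt.eq_of_eventually_add_inner_le (hw : HasGradientAt φ w c)
    (hv : ∀ᶠ z in 𝓝 c, φ c + ⟪v, z - c⟫_ℝ ≤ φ z) : v = w := by
  have hmin : IsLocalMin (fun z => φ z - ⟪v, z - c⟫_ℝ) c :=
    hv.mono fun z hz => by simp only [sub_self, inner_zero_right, sub_zero]; linarith
  have hderiv : HasFDerivAt (fun z => φ z - ⟪v, z - c⟫_ℝ)
      (InnerProductSpace.toDual ℝ E w - innerSL ℝ v) c :=
    hw.hasFDerivAt.sub (by
      simpa [Function.comp_def] using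
        (innerSL ℝ v).hasFDerivAt.comp c ((hasFDerivAt_id c).sub_const c))
  have hself : ⟪w - v, w - v⟫_ℝ = 0 := by
    have := DFunLike.congr_fun (sub_eq_zero.1 (hmin.hasFDerivAt_eq_zero hderiv)) (w - v)
    simp only [InnerProductSpace.toDual_apply_apply, innerSL_apply_apply] at this
    rw [inner_sub_left, this, sub_self]
  exact (sub_eq_zero.1 (inner_self_eq_zero.1 hself)).symm

variable [FiniteDimensional ℝ E] {U : Set E}

theorem ConvexOn.exists_eventually_norm_gradient_le (hU : IsOpen U) (hφ : ConvexOn ℝ U φ)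
    (hg : ∀ y ∈ U, HasGradientAt φ (g y) y) (hc : c ∈ U) :
    ∃ M, ∀ᶠ y in 𝓝 c, ‖g y‖ ≤ M := by
  obtain ⟨r, hr, hball⟩ : ∃ r > 0, Metric.closedBall c (2 * r) ⊆ U := by
    obtain ⟨ε, hε, hεU⟩ := Metric.nhds_basis_closedBall.mem_iff.1 (hU.mem_nhds hc)
    exact ⟨ε / 2, by positivity, by rwa [mul_div_cancel₀ _ two_ne_zero]⟩
  obtain ⟨M₀, hM₀⟩ := (isCompact_closedBall c (2 * r)).exists_bound_of_continuousOn
    fun z hz => (hg z (hball hz)).differentiableAt.continuousAt.continuousWithinAt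
  refine ⟨2 * M₀ / r, ?_⟩
  filter_upwards [Metric.ball_mem_nhds c hr] with y hy
  have hyU : y ∈ Metric.closedBall c (2 * r) :=
    Metric.closedBall_subset_closedBall (by linarith) (Metric.ball_subset_closedBall hy)
  -- test the subgradient inequality at `y` in the direction of `g y`
  set z := y + (r / ‖g y‖) • g y
  have hz : z ∈ Metric.closedBall c (2 * r) := by
    rw [Metric.mem_ball] at hy
    rw [Metric.mem_closedBall]
    calc dist z c ≤ dist z y + dist y c := dist_triangle _ _ _
      _ ≤ r + r := by
        gcongr
        rw [dist_eq_norm, add_sub_cancel_left, norm_smul, Real.norm_eq_abs, abs_div, abs_norm,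
          abs_of_pos hr]
        rcases eq_or_ne (g y) 0 with h0 | h0
        · simp [h0, hr.le]
        · rw [div_mul_cancel₀ _ (norm_ne_zero_iff.2 h0)]
      _ = 2 * r := by ring
  have hinner : ⟪g y, z - y⟫_ℝ = r * ‖g y‖ := by
    rcases eq_or_ne (g y) 0 with h0 | h0
    · simp [h0]
    · rw [add_sub_cancel_left, real_inner_smul_right, real_inner_self_eq_norm_sq]
      field_simp
  have hsub := hφ.add_inner_gradient_le (hball hyU) (hball hz) (hg y (hball hyU))
  have hφy := hM₀ y hyU
  have hφz := hM₀ z hz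
  rw [Real.norm_eq_abs, abs_le] at hφy hφz
  rw [le_div_iff₀ hr]
  linarith

theorem ConvexOn.continuousOn_gradient (hU : IsOpen U) (hφ : ConvexOn ℝ U φ)
    (hg : ∀ y ∈ U, HasGradientAt φ (g y) y) : ContinuousOn g U := by
  intro c hc
  refine ContinuousAt.continuousWithinAt ?_
  obtain ⟨M, hM⟩ := hφ.exists_eventually_norm_gradient_le hU hg hc
  refine (isCompact_closedBall (0 : E) M).tendsto_nhds_of_unique_mapClusterPt
    (hM.mono fun y hy => mem_closedBall_zero_iff.2 hy) fun v _ hv => ?_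
  -- a cluster value of `g` at `c` is a subgradient at `c`, hence the gradient
  obtain ⟨𝒰, h𝒰, hv𝒰⟩ := mapClusterPt_iff_ultrafilter.1 hv
  refine (hg c hc).eq_of_eventually_add_inner_le ?_
  filter_upwards [hU.mem_nhds hc] with z hz
  have hlim : Tendsto (fun y => φ y + ⟪g y, z - y⟫_ℝ) 𝒰 (𝓝 (φ c + ⟪v, z - c⟫_ℝ)) :=
    ((hg c hc).differentiableAt.continuousAt.tendsto.mono_left h𝒰).add
      (hv𝒰.inner (tendsto_const_nhds.sub h𝒰))
  exact le_of_tendsto hlim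
    (Eventually.mono (h𝒰 (hU.mem_nhds hc)) fun y hy => hφ.add_inner_gradient_le hy hz (hg y hy))

end Gradient

section Danskin

variable {X : Type*} [TopologicalSpace X] {C : Set X} {u v : X → ℝ} {y : X}

theorem IsCompact.exists_isMaxOn_setOf_isMaxOn [T2Space X] (hC : IsCompact C)
    (hCne : C.Nonempty) (hu : ContinuousOn u C) (hv : ContinuousOn v C) :
    ∃ y ∈ {c ∈ C | IsMaxOn u C c}, IsMaxOn v {c ∈ C | IsMaxOn u C c} y := by
  obtain ⟨y₀, hy₀C, hy₀⟩ := hC.exists_isMaxOn hCne hu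
  have hS : {c ∈ C | IsMaxOn u C c} = C ∩ u ⁻¹' Ici (u y₀) := by
    ext c
    simp only [mem_ofPred_eq, mem_inter_iff, mem_preimage, mem_Ici, isMaxOn_iff]
    exact and_congr_right fun _ => ⟨fun h => h y₀ hy₀C, fun h c' hc' => (hy₀ hc').trans h⟩
  have hScomp : IsCompact {c ∈ C | IsMaxOn u C c} := by
    rw [hS]
    exact hC.of_isClosed_subset (hu.preimage_isClosed_of_isClosed hC.isClosed isClosed_Ici)
      inter_subset_left
  exact hScomp.exists_isMaxOn ⟨y₀, hy₀C, hy₀⟩ (hv.mono fun c hc => hc.1)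

theorem IsCompact.tendsto_danskin (hC : IsCompact C) (hu : ContinuousOn u C)
    (hv : ContinuousOn v C) (hy : y ∈ {c ∈ C | IsMaxOn u C c})
    (hyv : IsMaxOn v {c ∈ C | IsMaxOn u C c} y) :
    Tendsto (fun t => t⁻¹ * (sSup ((fun c => u c + t * v c) '' C) - sSup (u '' C)))
      (𝓝[>] 0) (𝓝 (v y)) := by
  obtain ⟨hyC, hyu⟩ := hy
  have huv : ∀ t : ℝ, ContinuousOn (fun c => u c + t * v c) C :=
    fun t => hu.add (continuousOn_const.mul hv)
  rw [(IsGreatest.csSup_eq ⟨mem_image_of_mem u hyC, forall_mem_image.2 hyu⟩ :)]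
  refine tendsto_order.2 ⟨fun a ha => ?_, fun a ha => ?_⟩
  · filter_upwards [self_mem_nhdsWithin] with t (ht : 0 < t)
    have := le_csSup (hC.bddAbove_image (huv t)) (mem_image_of_mem _ hyC)
    rw [lt_inv_mul_iff₀ ht]
    nlinarith
  · -- away from the maximizers of `u`, `u` stays `δ` below its maximum
    obtain ⟨δ, hδ, hδle⟩ : ∃ δ > 0, ∀ c ∈ C, δ ≤ max (u y - u c) (a - v c) := by
      refine hC.exists_forall_le' (f := fun c => max (u y - u c) (a - v c))
        ((continuousOn_const.sub hu).sup (continuousOn_const.sub hv)) fun c hc => ?_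
      by_contra! hle
      obtain ⟨huc, hvc⟩ := max_le_iff.1 hle
      have hcS : IsMaxOn u C c :=
        isMaxOn_iff.2 fun c' hc' => (isMaxOn_iff.1 hyu c' hc').trans (by linarith)
      have : v c ≤ v y := hyv ⟨hc, hcS⟩
      linarith
    obtain ⟨M, hM⟩ := hC.bddAbove_image hv
    have hsmall : ∀ᶠ t in 𝓝[>] (0 : ℝ), t * (M - a) < δ := by
      have : Tendsto (fun t : ℝ => t * (M - a)) (𝓝[>] 0) (𝓝 0) := by
        simpa using (tendsto_id.mul_const (M - a)).mono_left (nhdsWithin_le_nhds (a := (0 : ℝ)))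
      exact this.eventually (gt_mem_nhds hδ)
    filter_upwards [self_mem_nhdsWithin, hsmall] with t (ht : 0 < t) hts
    obtain ⟨c, hc, hcsup, -⟩ := hC.exists_sSup_image_eq_and_ge ⟨y, hyC⟩ (huv t)
    rw [hcsup, inv_mul_lt_iff₀ ht]
    have hucy : u c ≤ u y := hyu hc
    rcases lt_or_ge (v c) a with hva | hva
    · nlinarith
    · have hδc : δ ≤ u y - u c := by
        rcases le_max_iff.1 (hδle c hc) with h | h
        · exact h
        · linarith
      have hvM : v c ≤ M := hM (mem_image_of_mem v hc)
      nlinarith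

end Danskin

theorem IsMaxOn.biSup_add_coe_eq {α : Type*} {s : Set α} {w : α → ℝ} {y : α}
    (hmax : IsMaxOn w s y) (hy : y ∈ s) (A : EReal) :
    ⨆ c ∈ s, A + (w c : EReal) = A + w y :=
  le_antisymm (iSup₂_le fun _ hc => add_le_add le_rfl (EReal.coe_le_coe_iff.2 (hmax hc)))
    (le_iSup₂_of_le y hy le_rfl)

theorem EReal.add_coe_sub_coe_add_coe (A : EReal) (a b p : ℝ) :
    A + a - ((p + b : ℝ) : EReal) = A - p + ((a - b : ℝ) : EReal) := by
  induction A using EReal.rec with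
  | bot => simp
  | top => norm_cast
  | coe r => norm_cast; ring

theorem EReal.sub_coe_sub_coe (A : EReal) (a b : ℝ) : A - a - b = A - ((a + b : ℝ) : EReal) := by
  induction A using EReal.rec with
  | bot => simp
  | top => simp only [EReal.top_sub_coe]
  | coe r => norm_cast; ring

namespace BregmanSetup

variable {J : ℕ} {B : BregmanSetup J} {C : Set (EuclideanSpace ℝ (Fin J))}
  {c x z : EuclideanSpace ℝ (Fin J)}

def tangent (B : BregmanSetup J) (c z : EuclideanSpace ℝ (Fin J)) : ℝ :=
  (B.f c).toReal + ⟪B.grad c, z - c⟫_ℝ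

theorem tangent_add_smul (c x h : EuclideanSpace ℝ (Fin J)) (t : ℝ) :
    B.tangent c (x + t • h) = B.tangent c x + t * ⟪h, B.grad c⟫_ℝ := by
  rw [tangent, tangent, add_sub_right_comm, inner_add_right, real_inner_smul_right,
    real_inner_comm h]
  ring

namespace IsLegendre

theorem coe_toReal_f (hB : B.IsLegendre) (hz : z ∈ B.dom) : ((B.f z).toReal : EReal) = B.f z :=
  EReal.coe_toReal hz (hB.proper_bot z)

theorem D_eq_sub_tangent (hB : B.IsLegendre) (hc : c ∈ B.U) (z : EuclideanSpace ℝ (Fin J)) :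
    B.D z c = B.f z - B.tangent c z := by
  rw [D, if_pos hc, tangent, ← EReal.sub_coe_sub_coe]
  conv_lhs => rw [← hB.coe_toReal_f (interior_subset hc)]

theorem continuousOn_grad (hB : B.IsLegendre) : ContinuousOn B.grad B.U :=
  (hB.convexOn.subset interior_subset hB.convex_dom.interior).continuousOn_gradient
    isOpen_interior hB.smooth

theorem continuousOn_tangent (hB : B.IsLegendre) (z : EuclideanSpace ℝ (Fin J)) :
    ContinuousOn (fun c => B.tangent c z) B.U := fun c hc =>
  ((hB.smooth c hc).differentiableAt.continuousAt.add
    ((hB.continuousOn_grad.continuousAt (isOpen_interior.mem_nhds hc)).inner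
      (continuousAt_const.sub continuousAt_id))).continuousWithinAt

theorem F_eq_add_sSup (hB : B.IsLegendre) (hC : IsCompact C) (hCne : C.Nonempty) (hCU : C ⊆ B.U)
    (z : EuclideanSpace ℝ (Fin J)) :
    B.F C z = B.f z + ((sSup ((fun c => -B.tangent c z) '' C) : ℝ) : EReal) := by
  obtain ⟨c, hc, hsup, hmax⟩ :=
    hC.exists_sSup_image_eq_and_ge (f := fun c => -B.tangent c z) hCne
      ((hB.continuousOn_tangent z).mono hCU).neg
  rw [hsup, F, ← (isMaxOn_iff.2 hmax).biSup_add_coe_eq hc]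
  refine biSup_congr fun c' hc' => ?_
  rw [hB.D_eq_sub_tangent (hCU hc'), EReal.coe_neg, sub_eq_add_neg]

theorem Q_eq_setOf_isMaxOn (hB : B.IsLegendre) (hCU : C ⊆ B.U) (hx : x ∈ B.dom) :
    B.Q C x = {c ∈ C | IsMaxOn (fun c => -B.tangent c x) C c} := by
  have hD : ∀ c ∈ C, B.D x c = (((B.f x).toReal - B.tangent c x : ℝ) : EReal) := fun c hc => by
    rw [hB.D_eq_sub_tangent (hCU hc), EReal.coe_sub, hB.coe_toReal_f hx]
  ext c
  simp only [Q, mem_ofPred_eq, isMaxOn_iff]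
  refine ⟨fun ⟨hc, _, hmax⟩ => ⟨hc, fun c' hc' => ?_⟩,
    fun ⟨hc, hmax⟩ => ⟨hc, hx, fun c' hc' => ?_⟩⟩
  · have := hmax c' hc'
    rw [hD c' hc', hD c hc, EReal.coe_le_coe_iff] at this
    linarith
  · rw [hD c' hc', hD c hc, EReal.coe_le_coe_iff]
    linarith [hmax c' hc']

end IsLegendre

end BregmanSetup

/-- **Directional derivative of the farthest-distance function** (Theorem 4.2):
for `C ⊆ U` nonempty compact, `x ∈ dom f` and `h ∈ ℝ^J`, if `f'(x;h) = Lf` (as a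
limit of difference quotients in `EReal`), then the difference quotients of `F_C`
converge to `sup { f'(x;h) - ⟨h, ∇f(y)⟩ : y ∈ Q_C(x) }`. -/
theorem farthest_distance_directional_derivative {J : ℕ} (B : BregmanSetup J)
    (hB : B.IsLegendre) (C : Set (EuclideanSpace ℝ (Fin J))) (hCne : C.Nonempty) (hCU : C ⊆ B.U)
    (hCcomp : IsCompact C) (x h : EuclideanSpace ℝ (Fin J)) (hx : x ∈ B.dom) (Lf : EReal)
    (hLf : Tendsto (fun t : ℝ => ((t⁻¹ : ℝ) : EReal) * (B.f (x + t • h) - B.f x))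
      (nhdsWithin 0 (Set.Ioi 0)) (nhds Lf)) :
    Tendsto (fun t : ℝ => ((t⁻¹ : ℝ) : EReal) * (B.F C (x + t • h) - B.F C x))
      (nhdsWithin 0 (Set.Ioi 0))
      (nhds (⨆ y ∈ B.Q C x, (Lf - ((inner ℝ h (B.grad y) : ℝ) : EReal)))) := by
  set u : EuclideanSpace ℝ (Fin J) → ℝ := fun c => -B.tangent c x
  set v : EuclideanSpace ℝ (Fin J) → ℝ := fun c => -⟪h, B.grad c⟫_ℝ
  have hu : ContinuousOn u C := ((hB.continuousOn_tangent x).mono hCU).neg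
  have hv : ContinuousOn v C := (continuousOn_const.inner (hB.continuousOn_grad.mono hCU)).neg
  obtain ⟨y, hyS, hyv⟩ := hCcomp.exists_isMaxOn_setOf_isMaxOn hCne hu hv
  have hF : ∀ t : ℝ, B.F C (x + t • h)
      = B.f (x + t • h) + ((sSup ((fun c => u c + t * v c) '' C) : ℝ) : EReal) := fun t => by
    have hlin : (fun c => -B.tangent c (x + t • h)) = fun c => u c + t * v c :=
      funext fun c => by simp only [BregmanSetup.tangent_add_smul, u, v]; ring
    rw [hB.F_eq_add_sSup hCcomp hCne hCU, hlin]
  have hF₀ : B.F C x = (((B.f x).toReal + sSup (u '' C) : ℝ) : EReal) := by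
    rw [hB.F_eq_add_sSup hCcomp hCne hCU, EReal.coe_add, hB.coe_toReal_f hx]
  have hQ : ⨆ y ∈ B.Q C x, (Lf - ((inner ℝ h (B.grad y) : ℝ) : EReal)) = Lf + v y := by
    rw [hB.Q_eq_setOf_isMaxOn hCU hx, ← hyv.biSup_add_coe_eq hyS]
    simp only [v, EReal.coe_neg, sub_eq_add_neg]
    rfl
  have hsum := (EReal.continuousAt_add (p := (Lf, (v y : EReal))) (.inr (EReal.coe_ne_bot _))
    (.inr (EReal.coe_ne_top _))).tendsto.comp
    (hLf.prodMk_nhds (EReal.tendsto_coe.2 (hCcomp.tendsto_danskin hu hv hyS hyv)))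
  rw [hQ]
  refine hsum.congr' ?_
  filter_upwards [self_mem_nhdsWithin] with t (ht : 0 < t)
  rw [hF, hF₀, EReal.add_coe_sub_coe_add_coe, EReal.left_distrib_of_nonneg_of_ne_top
    (EReal.coe_nonneg.2 (inv_nonneg.2 ht.le)) (EReal.coe_ne_top _), ← EReal.coe_mul,
    hB.coe_toReal_f hx]
  rfl
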